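/- Let n be a positive integer and let ℚ(v) be the field of rational functions over ℚ in an indeterminate v, with quantum binomial coefficients [m choose p] built from the balanced quantum integers [t] = (v^t - v^{-t})/(v - v^{-1}). Let U(sl₂) be the ℚ(v)-algebra presented by generators E, F, K, K' and relations KK' = 1 = K'K, KE = v²EK, KF = v⁻²FK, (v - v⁻¹)(EF - FE) = K - K'. Let V_n be the ℚ(v)-algebra presented by generators E⁺, E⁻, K, K' and relations: KK' = 1 = K'K; KE⁺ = v²E⁺K; KE⁻ = v⁻²E⁻K; (v - v⁻¹)(E⁺E⁻ - E⁻E⁺) = K - K'; Σ_{p=0}^{2n+1} (-1)^p [2n+1 choose p] (E⁺)^p E⁻ (E⁺)^{2n+1-p} = 0; and Σ_{p=0}^{2n+1} (-1)^p [2n+1 choose p] (E⁻)^p E⁺ (E⁻)^{2n+1-p} = 0. Then there is a unique ℚ(v)-algebra isomorphism φ: U(sl₂) → V_n with φ(E) = E⁺, φ(F) = E⁻, φ(K) = K, φ(K') = K'. -/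

import Mathlib

open FreeAlgebra

/-- Balanced quantum integer `[m] = (v^m - v^{-m})/(v - v⁻¹)`. -/
noncomputable def qint {F : Type*} [Field F] (v : F) (m : ℤ) : F :=
  (v ^ m - v ^ (-m)) / (v - v⁻¹)

/-- Quantum factorial `[m]! = ∏_{t=1}^m [t]`. -/
noncomputable def qfact {F : Type*} [Field F] (v : F) : ℕ → F
  | 0 => 1
  | m + 1 => qfact v m * qint v (m + 1)

/-- Quantum binomial coefficient `[m choose t] = [m]!/([t]![m-t]!)`. -/
noncomputable def qbinom {F : Type*} [Field F] (v : F) (m t : ℕ) : F :=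
  qfact v m / (qfact v t * qfact v (m - t))

/-- The field ℚ(v) of rational functions over ℚ. -/
abbrev Kv : Type := RatFunc ℚ

/-- The indeterminate `v` of ℚ(v). -/
noncomputable def vv : Kv := RatFunc.X

/-- Generators of the quantized enveloping algebra U(sl₂). -/
inductive UGen | E | F | K | K'

/-- Generators of the algebra V_n. -/
inductive VGen | Ep | Em | K | K'

/-- Defining relations of U(sl₂). -/
inductive URel : FreeAlgebra Kv UGen → FreeAlgebra Kv UGen → Prop
  | KK' : URel (ι Kv UGen.K * ι Kv UGen.K') 1
  | K'K : URel (ι Kv UGen.K' * ι Kv UGen.K) 1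
  | KE : URel (ι Kv UGen.K * ι Kv UGen.E) (vv ^ 2 • (ι Kv UGen.E * ι Kv UGen.K))
  | KF : URel (ι Kv UGen.K * ι Kv UGen.F) ((vv⁻¹) ^ 2 • (ι Kv UGen.F * ι Kv UGen.K))
  | EF : URel ((vv - vv⁻¹) • (ι Kv UGen.E * ι Kv UGen.F - ι Kv UGen.F * ι Kv UGen.E))
      (ι Kv UGen.K - ι Kv UGen.K')

/-- Defining relations of V_n, including the higher quantum Serre relations of
order `2n+1` coming from the Cartan matrix `[[2, -2n], [-2n, 2]]`. -/
inductive VnRel (n : ℕ) : FreeAlgebra Kv VGen → FreeAlgebra Kv VGen → Prop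
  | KK' : VnRel n (ι Kv VGen.K * ι Kv VGen.K') 1
  | K'K : VnRel n (ι Kv VGen.K' * ι Kv VGen.K) 1
  | KE : VnRel n (ι Kv VGen.K * ι Kv VGen.Ep) (vv ^ 2 • (ι Kv VGen.Ep * ι Kv VGen.K))
  | KF : VnRel n (ι Kv VGen.K * ι Kv VGen.Em) ((vv⁻¹) ^ 2 • (ι Kv VGen.Em * ι Kv VGen.K))
  | EF : VnRel n ((vv - vv⁻¹) • (ι Kv VGen.Ep * ι Kv VGen.Em - ι Kv VGen.Em * ι Kv VGen.Ep))
      (ι Kv VGen.K - ι Kv VGen.K')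
  | serreA : VnRel n
      (∑ p ∈ Finset.range (2 * n + 2),
        ((-1 : Kv) ^ p * qbinom vv (2 * n + 1) p) •
          (ι Kv VGen.Ep ^ p * ι Kv VGen.Em * ι Kv VGen.Ep ^ (2 * n + 1 - p))) 0
  | serreB : VnRel n
      (∑ p ∈ Finset.range (2 * n + 2),
        ((-1 : Kv) ^ p * qbinom vv (2 * n + 1) p) •
          (ι Kv VGen.Em ^ p * ι Kv VGen.Ep * ι Kv VGen.Em ^ (2 * n + 1 - p))) 0

/-!
The relations of `V_n` other than the higher Serre relations are those of `U(sl₂)`, so everything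
comes down to the vanishing of the Serre elements in `U(sl₂)`. Moving `F` past powers of `E`
gives `(v - v⁻¹)(E^{p+1}F - FE^{p+1}) = [p+1] E^p (v^p K - v^{-p} K')`, which rewrites the Serre
element of order `m = 2n+1` as a combination of `F E^m`, `E^{m-1} K` and `E^{m-1} K'`. The
coefficients are alternating sums `∑_q (-1)^q [M, q] v^{cq} = ∏_{i<M} (1 - v^{c-M+1+2i})` (the
`q`-binomial theorem), with `c = 0, M = m` and `c = ±1, M = 2n ≥ 2`; in each case one factor of
the product is `0`. Hence both presentations map onto each other's generators, and the two maps
are inverse.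
-/

section QuantumNumbers

variable {F : Type*} [Field F] {v : F}

theorem qint_add (hv₀ : v ≠ 0) (a b : ℤ) :
    qint v (a + b) = v ^ b * qint v a + v ^ (-a) * qint v b := by
  simp only [qint, neg_add, zpow_add₀ hv₀, zpow_neg]
  ring

theorem qint_one (hw : v - v⁻¹ ≠ 0) : qint v 1 = 1 := by
  simp [qint, hw]

theorem qint_mul_sub_inv (hw : v - v⁻¹ ≠ 0) (a : ℤ) :
    qint v a * (v - v⁻¹) = v ^ a - v ^ (-a) :=
  div_mul_cancel₀ _ hw

theorem sub_inv_ne_zero (hv₀ : v ≠ 0) (hv : ¬IsOfFinOrder v) : v - v⁻¹ ≠ 0 := by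
  intro h
  refine hv (isOfFinOrder_iff_pow_eq_one.mpr ⟨2, two_pos, ?_⟩)
  rw [sq]
  nth_rw 2 [sub_eq_zero.mp h]
  exact mul_inv_cancel₀ hv₀

theorem qint_ne_zero (hv₀ : v ≠ 0) (hv : ¬IsOfFinOrder v) {p : ℕ} (hp : 0 < p) :
    qint v p ≠ 0 := by
  refine div_ne_zero (fun h => hv (isOfFinOrder_iff_pow_eq_one.mpr ⟨2 * p, by omega, ?_⟩))
    (sub_inv_ne_zero hv₀ hv)
  rw [zpow_neg, zpow_natCast, sub_eq_zero] at h
  rw [two_mul, pow_add]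
  nth_rw 1 [h]
  exact inv_mul_cancel₀ (pow_ne_zero p hv₀)

theorem qfact_ne_zero (hv₀ : v ≠ 0) (hv : ¬IsOfFinOrder v) (m : ℕ) : qfact v m ≠ 0 := by
  induction m with
  | zero => exact one_ne_zero
  | succ m ih => exact mul_ne_zero ih (by exact_mod_cast qint_ne_zero hv₀ hv m.succ_pos)

theorem qbinom_zero_right (hv₀ : v ≠ 0) (hv : ¬IsOfFinOrder v) (m : ℕ) :
    qbinom v m 0 = 1 := by
  simp [qbinom, qfact, qfact_ne_zero hv₀ hv m]

theorem qbinom_self (hv₀ : v ≠ 0) (hv : ¬IsOfFinOrder v) (m : ℕ) : qbinom v m m = 1 := by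
  simp [qbinom, qfact, qfact_ne_zero hv₀ hv m]

theorem qbinom_succ_succ (hv₀ : v ≠ 0) (hv : ¬IsOfFinOrder v) {m j : ℕ} (hj : j < m) :
    qbinom v (m + 1) (j + 1) =
      v ^ ((j : ℤ) + 1) * qbinom v m (j + 1) + v ^ ((j : ℤ) - m) * qbinom v m j := by
  obtain ⟨s, rfl⟩ : ∃ s, m = j + 1 + s := ⟨m - (j + 1), by omega⟩
  have hq (p : ℕ) : qint v ((p : ℤ) + 1) ≠ 0 := by
    exact_mod_cast qint_ne_zero hv₀ hv p.succ_pos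
  have hsplit : qint v (((j + s + 1 : ℕ) : ℤ) + 1) =
      v ^ ((j : ℤ) + 1) * qint v ((s : ℤ) + 1) +
        v ^ (-((s : ℤ) + 1)) * qint v ((j : ℤ) + 1) := by
    rw [← qint_add hv₀]
    push_cast
    ring_nf
  rw [qbinom, qbinom, qbinom, show j + 1 + s + 1 - (j + 1) = s + 1 by omega,
    show j + 1 + s - (j + 1) = s by omega, show j + 1 + s - j = s + 1 by omega,
    show j + 1 + s + 1 = j + s + 1 + 1 by omega, show j + 1 + s = j + s + 1 by omega,
    qfact.eq_2 v (j + s + 1), hsplit, qfact.eq_2 v j, qfact.eq_2 v s,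
    show (j : ℤ) - ((j + s + 1 : ℕ) : ℤ) = -((s : ℤ) + 1) by push_cast; ring]
  have := qfact_ne_zero hv₀ hv
  field_simp [hq j, hq s, this j, this s, this (j + s + 1), zpow_ne_zero _ hv₀]

theorem qbinom_succ_mul_qint (hv₀ : v ≠ 0) (hv : ¬IsOfFinOrder v) {m q : ℕ} (hq : q ≤ m) :
    qbinom v (m + 1) (q + 1) * qint v ((q : ℤ) + 1) = qint v ((m : ℤ) + 1) * qbinom v m q := by
  have := qfact_ne_zero hv₀ hv
  have hq' : qint v ((q : ℤ) + 1) ≠ 0 := by exact_mod_cast qint_ne_zero hv₀ hv q.succ_pos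
  rw [qbinom, qbinom, show m + 1 - (q + 1) = m - q by omega, qfact.eq_2 v m, qfact.eq_2 v q]
  field_simp [this q, this (m - q), hq']

theorem sum_qbinom_mul_zpow (hv₀ : v ≠ 0) (hv : ¬IsOfFinOrder v) (M : ℕ) (c : ℤ) :
    ∑ q ∈ Finset.range (M + 1), (-1) ^ q * qbinom v M q * v ^ (c * q) =
      ∏ i ∈ Finset.range M, (1 - v ^ (c - M + 1 + 2 * i)) := by
  induction M generalizing c with
  | zero => simp [qbinom_zero_right hv₀ hv]
  | succ M ih =>
    suffices hrec : ∑ q ∈ Finset.range (M + 2), (-1) ^ q * qbinom v (M + 1) q * v ^ (c * q) =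
        (1 - v ^ (c - M)) *
          ∑ q ∈ Finset.range (M + 1), (-1) ^ q * qbinom v M q * v ^ ((c + 1) * q) by
      rw [hrec, ih, Finset.prod_range_succ', mul_comm]
      push_cast
      ring_nf
    have hpascal : ∀ q ∈ Finset.range M,
        (-1) ^ (q + 1) * qbinom v (M + 1) (q + 1) * v ^ (c * ((q + 1 : ℕ) : ℤ)) =
          (-1) ^ (q + 1) * qbinom v M (q + 1) * v ^ ((c + 1) * ((q + 1 : ℕ) : ℤ)) -
            v ^ (c - M) * ((-1) ^ q * qbinom v M q * v ^ ((c + 1) * q)) := by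
      intro q hq
      rw [qbinom_succ_succ hv₀ hv (Finset.mem_range.mp hq)]
      push_cast
      rw [show (c + 1) * (q + 1) = c * (q + 1) + (q + 1) by ring,
        show (c + 1) * q = c * (q + 1) + (q - M) - (c - M) by ring]
      simp only [zpow_add₀ hv₀, zpow_sub₀ hv₀, pow_succ]
      field_simp [zpow_ne_zero _ hv₀]
      ring
    have hlast : v ^ (c * ((M + 1 : ℕ) : ℤ)) = v ^ (c - M) * v ^ ((c + 1) * M) := by
      rw [← zpow_add₀ hv₀]
      push_cast
      ring_nf
    have hfirst := Finset.sum_range_succ'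
      (fun q => (-1) ^ q * qbinom v M q * v ^ ((c + 1) * (q : ℤ))) M
    have hend := Finset.sum_range_succ
      (fun q => (-1) ^ q * qbinom v M q * v ^ ((c + 1) * (q : ℤ))) M
    rw [Finset.sum_range_succ', Finset.sum_range_succ, Finset.sum_congr rfl hpascal,
      Finset.sum_sub_distrib, ← Finset.mul_sum]
    simp only [qbinom_self hv₀ hv, qbinom_zero_right hv₀ hv, Nat.cast_zero, mul_zero,
      zpow_zero, pow_zero, mul_one] at hfirst hend ⊢
    rw [hlast]
    linear_combination v ^ (c - M) * hend - hfirst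

theorem sum_qbinom_mul_zpow_eq_zero (hv₀ : v ≠ 0) (hv : ¬IsOfFinOrder v) {M i : ℕ} {c : ℤ}
    (hi : i < M) (hc : c + 2 * i + 1 = M) :
    ∑ q ∈ Finset.range (M + 1), (-1) ^ q * qbinom v M q * v ^ (c * q) = 0 := by
  rw [sum_qbinom_mul_zpow hv₀ hv]
  refine Finset.prod_eq_zero (Finset.mem_range.mpr hi) ?_
  rw [show c - M + 1 + 2 * i = 0 by omega, zpow_zero, sub_self]

theorem sum_qbinom_succ_mul_qint_mul_zpow_eq_zero (hv₀ : v ≠ 0) (hv : ¬IsOfFinOrder v)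
    {M i : ℕ} {s : ℤ} (hi : i < M) (hs : -s + 2 * i + 1 = M) :
    ∑ q ∈ Finset.range (M + 1),
      (-1) ^ (q + 1) * qbinom v (M + 1) (q + 1) * (qint v ((q : ℤ) + 1) * v ^ (s * (2 * M - q))) =
        0 := by
  have hterm : ∀ q ∈ Finset.range (M + 1),
      (-1) ^ (q + 1) * qbinom v (M + 1) (q + 1) * (qint v ((q : ℤ) + 1) * v ^ (s * (2 * M - q))) =
        -(qint v ((M : ℤ) + 1) * v ^ (2 * s * M)) * ((-1) ^ q * qbinom v M q * v ^ (-s * q)) := by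
    intro q hq
    rw [← mul_assoc, mul_assoc _ (qbinom _ _ _),
      qbinom_succ_mul_qint hv₀ hv (Nat.lt_succ_iff.mp (Finset.mem_range.mp hq)),
      show s * (2 * M - q) = 2 * s * M + -s * q by ring, zpow_add₀ hv₀]
    ring
  rw [Finset.sum_congr rfl hterm, ← Finset.mul_sum, sum_qbinom_mul_zpow_eq_zero hv₀ hv hi hs,
    mul_zero]

end QuantumNumbers

theorem mul_pow_eq_smul_pow_mul {R A : Type*} [CommSemiring R] [Semiring A] [Algebra R A]
    {c : R} {k e : A} (h : k * e = c • (e * k)) (m : ℕ) :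
    k * e ^ m = c ^ m • (e ^ m * k) := by
  induction m with
  | zero => simp
  | succ m ih =>
    rw [pow_succ, ← mul_assoc, ih, smul_mul_assoc, mul_assoc, h, mul_smul_comm, smul_smul,
      ← mul_assoc, ← pow_succ, pow_succ c]

theorem mul_eq_inv_smul_of_mul_eq_smul {F A : Type*} [Field F] [Semiring A] [Algebra F A]
    {c : F} {k k' e : A} (hkk' : k * k' = 1) (hk'k : k' * k = 1) (hc : c ≠ 0)
    (h : k * e = c • (e * k)) : k' * e = c⁻¹ • (e * k') := by
  have hek' : e * k' = c • (k' * e) := by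
    calc e * k' = k' * (k * e) * k' := by rw [← mul_assoc k', hk'k, one_mul]
      _ = c • (k' * e) := by
        rw [h, mul_smul_comm, smul_mul_assoc, mul_assoc, mul_assoc, hkk', mul_one]
  rw [hek', inv_smul_smul₀ hc]

section UqSl2

variable {F : Type*} [Field F] {A : Type*} [Ring A] [Algebra F A]

structure IsUqSl2Quadruple (v : F) (e f k k' : A) : Prop where
  k_mul_k' : k * k' = 1
  k'_mul_k : k' * k = 1
  k_mul_e : k * e = v ^ 2 • (e * k)
  k_mul_f : k * f = v⁻¹ ^ 2 • (f * k)
  commutator : (v - v⁻¹) • (e * f - f * e) = k - k'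

namespace IsUqSl2Quadruple

variable {v : F} {e f k k' : A}

theorem k'_mul_e (h : IsUqSl2Quadruple v e f k k') (hv₀ : v ≠ 0) :
    k' * e = v⁻¹ ^ 2 • (e * k') := by
  rw [mul_eq_inv_smul_of_mul_eq_smul h.k_mul_k' h.k'_mul_k (pow_ne_zero 2 hv₀) h.k_mul_e, inv_pow]

theorem swap (h : IsUqSl2Quadruple v e f k k') (hv₀ : v ≠ 0) : IsUqSl2Quadruple v f e k' k where
  k_mul_k' := h.k'_mul_k
  k'_mul_k := h.k_mul_k'
  k_mul_e := by
    rw [mul_eq_inv_smul_of_mul_eq_smul h.k_mul_k' h.k'_mul_k (by simp [hv₀]) h.k_mul_f, inv_pow,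
      inv_inv]
  k_mul_f := h.k'_mul_e hv₀
  commutator := by rw [← neg_sub (e * f), smul_neg, h.commutator, neg_sub]

theorem smul_pow_succ_mul_sub (h : IsUqSl2Quadruple v e f k k') (hv₀ : v ≠ 0)
    (hw : v - v⁻¹ ≠ 0) (p : ℕ) :
    (v - v⁻¹) • (e ^ (p + 1) * f - f * e ^ (p + 1)) =
      qint v ((p : ℤ) + 1) • (e ^ p * (v ^ p • k - v⁻¹ ^ p • k')) := by
  induction p with
  | zero => simp [h.commutator, qint_one hw]
  | succ p ih =>
    have hk := mul_pow_eq_smul_pow_mul h.k_mul_e (p + 1)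
    have hk' := mul_pow_eq_smul_pow_mul (h.k'_mul_e hv₀) (p + 1)
    have hα : qint v ((p : ℤ) + 1) * v ^ p + (v ^ 2) ^ (p + 1) =
        qint v (((p + 1 : ℕ) : ℤ) + 1) * v ^ (p + 1) := by
      refine mul_right_cancel₀ hw ?_
      rw [add_mul, mul_right_comm, qint_mul_sub_inv hw, mul_right_comm, qint_mul_sub_inv hw]
      push_cast
      simp only [neg_add, zpow_add₀ hv₀, zpow_neg, zpow_natCast, zpow_one]
      field_simp
      ring
    have hβ : qint v ((p : ℤ) + 1) * v⁻¹ ^ p + (v⁻¹ ^ 2) ^ (p + 1) =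
        qint v (((p + 1 : ℕ) : ℤ) + 1) * v⁻¹ ^ (p + 1) := by
      refine mul_right_cancel₀ hw ?_
      rw [add_mul, mul_right_comm, qint_mul_sub_inv hw, mul_right_comm, qint_mul_sub_inv hw]
      push_cast
      simp only [neg_add, zpow_add₀ hv₀, zpow_neg, zpow_natCast, zpow_one, inv_pow]
      field_simp
      ring
    have hsplit : e ^ (p + 1 + 1) * f - f * e ^ (p + 1 + 1) =
        e * (e ^ (p + 1) * f - f * e ^ (p + 1)) + (e * f - f * e) * e ^ (p + 1) := by
      simp only [mul_sub, sub_mul, ← mul_assoc, ← pow_succ']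
      rw [mul_assoc f e, ← pow_succ']
      abel
    rw [hsplit, smul_add, ← mul_smul_comm, ih, ← smul_mul_assoc (v - v⁻¹) (e * f - f * e),
      h.commutator, sub_mul, hk, hk']
    simp only [mul_sub, mul_smul_comm, ← mul_assoc, ← pow_succ']
    linear_combination (norm := module) hα • (e ^ (p + 1) * k) - hβ • (e ^ (p + 1) * k')

theorem smul_pow_succ_mul_mul_pow (h : IsUqSl2Quadruple v e f k k') (hv₀ : v ≠ 0)
    (hw : v - v⁻¹ ≠ 0) {q M : ℕ} (hq : q ≤ M) :
    (v - v⁻¹) • (e ^ (q + 1) * f * e ^ (M - q)) =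
      (v - v⁻¹) • (f * e ^ (M + 1))
        + (qint v ((q : ℤ) + 1) * v ^ (2 * (M : ℤ) - q)) • (e ^ M * k)
        - (qint v ((q : ℤ) + 1) * v ^ ((q : ℤ) - 2 * M)) • (e ^ M * k') := by
  obtain ⟨r, rfl⟩ := Nat.exists_eq_add_of_le hq
  have hk := mul_pow_eq_smul_pow_mul h.k_mul_e r
  have hk' := mul_pow_eq_smul_pow_mul (h.k'_mul_e hv₀) r
  have hα : v ^ q * (v ^ 2) ^ r = v ^ (2 * ((q + r : ℕ) : ℤ) - q) := by
    rw [← pow_mul, ← pow_add, ← zpow_natCast]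
    push_cast
    ring_nf
  have hβ : v⁻¹ ^ q * (v⁻¹ ^ 2) ^ r = v ^ ((q : ℤ) - 2 * ((q + r : ℕ) : ℤ)) := by
    rw [← pow_mul, ← pow_add, inv_pow, ← zpow_natCast, ← zpow_neg]
    push_cast
    ring_nf
  rw [Nat.add_sub_cancel_left, ← sub_add_cancel (e ^ (q + 1) * f) (f * e ^ (q + 1)), add_mul,
    smul_add, ← smul_mul_assoc, h.smul_pow_succ_mul_sub hv₀ hw q, mul_assoc f, ← pow_add,
    show q + 1 + r = q + r + 1 by ring, ← hα, ← hβ]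
  simp only [smul_mul_assoc, mul_sub, sub_mul, mul_smul_comm, mul_assoc, hk, hk']
  simp only [← mul_assoc, ← pow_add]
  module

theorem smul_sum_pow_mul_mul_pow (h : IsUqSl2Quadruple v e f k k') (hv₀ : v ≠ 0)
    (hw : v - v⁻¹ ≠ 0) (c : ℕ → F) (M : ℕ) :
    (v - v⁻¹) • ∑ p ∈ Finset.range (M + 2), c p • (e ^ p * f * e ^ (M + 1 - p)) =
      (∑ p ∈ Finset.range (M + 2), c p) • ((v - v⁻¹) • (f * e ^ (M + 1)))
      + (∑ q ∈ Finset.range (M + 1),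
          c (q + 1) * (qint v ((q : ℤ) + 1) * v ^ (2 * (M : ℤ) - q))) • (e ^ M * k)
      - (∑ q ∈ Finset.range (M + 1),
          c (q + 1) * (qint v ((q : ℤ) + 1) * v ^ ((q : ℤ) - 2 * M))) • (e ^ M * k') := by
  have hterm : ∀ q ∈ Finset.range (M + 1),
      (v - v⁻¹) • c (q + 1) • (e ^ (q + 1) * f * e ^ (M + 1 - (q + 1))) =
        c (q + 1) • ((v - v⁻¹) • (f * e ^ (M + 1)))
        + (c (q + 1) * (qint v ((q : ℤ) + 1) * v ^ (2 * (M : ℤ) - q))) • (e ^ M * k)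
        - (c (q + 1) * (qint v ((q : ℤ) + 1) * v ^ ((q : ℤ) - 2 * M))) • (e ^ M * k') := by
    intro q hq
    rw [Nat.add_sub_add_right, smul_comm,
      h.smul_pow_succ_mul_mul_pow hv₀ hw (Nat.lt_succ_iff.mp (Finset.mem_range.mp hq))]
    module
  rw [Finset.smul_sum, Finset.sum_range_succ', Finset.sum_range_succ' c,
    Finset.sum_congr rfl hterm, Finset.sum_sub_distrib, Finset.sum_add_distrib,
    ← Finset.sum_smul, ← Finset.sum_smul, ← Finset.sum_smul]
  simp only [pow_zero, one_mul, Nat.sub_zero]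
  module

theorem higher_serre (h : IsUqSl2Quadruple v e f k k') (hv₀ : v ≠ 0) (hv : ¬IsOfFinOrder v)
    {n : ℕ} (hn : 0 < n) :
    ∑ p ∈ Finset.range (2 * n + 2),
      ((-1) ^ p * qbinom v (2 * n + 1) p) • (e ^ p * f * e ^ (2 * n + 1 - p)) = 0 := by
  have hw := sub_inv_ne_zero hv₀ hv
  have hf : ∑ p ∈ Finset.range (2 * n + 2), (-1) ^ p * qbinom v (2 * n + 1) p = 0 := by
    simpa using sum_qbinom_mul_zpow_eq_zero hv₀ hv (M := 2 * n + 1) (i := n) (c := 0)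
      (by omega) (by omega)
  have hcoeffK := sum_qbinom_succ_mul_qint_mul_zpow_eq_zero hv₀ hv
    (M := 2 * n) (i := n) (s := 1) (by omega) (by omega)
  have hcoeffK' := sum_qbinom_succ_mul_qint_mul_zpow_eq_zero hv₀ hv
    (M := 2 * n) (i := n - 1) (s := -1) (by omega) (by omega)
  simp only [one_mul, neg_mul, neg_sub] at hcoeffK hcoeffK'
  refine (smul_eq_zero.mp ?_).resolve_left hw
  rw [h.smul_sum_pow_mul_mul_pow hv₀ hw, hf, hcoeffK, hcoeffK']
  simp

end IsUqSl2Quadruple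

end UqSl2

theorem vv_ne_zero : vv ≠ 0 := RatFunc.X_ne_zero

theorem not_isOfFinOrder_vv : ¬IsOfFinOrder vv := by
  intro h
  obtain ⟨m, hm, hvm⟩ := isOfFinOrder_iff_pow_eq_one.mp h
  have hX : (Polynomial.X : Polynomial ℚ) ^ m = 1 :=
    RatFunc.algebraMap_injective ℚ (by simpa [vv, RatFunc.algebraMap_X] using hvm)
  simpa [hm.ne'] using congrArg Polynomial.natDegree hX

section Presentation

open RingQuot

variable {A : Type*} [Ring A] [Algebra Kv A] {e f k k' : A}

noncomputable def uqSl2Lift (h : IsUqSl2Quadruple vv e f k k') : RingQuot URel →ₐ[Kv] A :=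
  liftAlgHom Kv ⟨FreeAlgebra.lift Kv (UGen.rec e f k k'), by
    rintro _ _ ⟨⟩ <;> simp [h.k_mul_k', h.k'_mul_k, h.k_mul_e, h.k_mul_f, h.commutator]⟩

@[simp]
theorem uqSl2Lift_mkAlgHom_ι (h : IsUqSl2Quadruple vv e f k k') (g : UGen) :
    uqSl2Lift h (mkAlgHom Kv URel (ι Kv g)) = UGen.rec e f k k' g := by
  simp [uqSl2Lift]

noncomputable def vnLift {n : ℕ} (hn : 0 < n) (h : IsUqSl2Quadruple vv e f k k') :
    RingQuot (VnRel n) →ₐ[Kv] A :=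
  liftAlgHom Kv ⟨FreeAlgebra.lift Kv (VGen.rec e f k k'), by
    rintro _ _ ⟨⟩ <;> simp [h.k_mul_k', h.k'_mul_k, h.k_mul_e, h.k_mul_f, h.commutator]
    · exact h.higher_serre vv_ne_zero not_isOfFinOrder_vv hn
    · exact (h.swap vv_ne_zero).higher_serre vv_ne_zero not_isOfFinOrder_vv hn⟩

@[simp]
theorem vnLift_mkAlgHom_ι {n : ℕ} (hn : 0 < n) (h : IsUqSl2Quadruple vv e f k k') (g : VGen) :
    vnLift hn h (mkAlgHom Kv (VnRel n) (ι Kv g)) = VGen.rec e f k k' g := by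
  simp [vnLift]

theorem isUqSl2Quadruple_uqSl2 :
    IsUqSl2Quadruple vv (mkAlgHom Kv URel (ι Kv UGen.E)) (mkAlgHom Kv URel (ι Kv UGen.F))
      (mkAlgHom Kv URel (ι Kv UGen.K)) (mkAlgHom Kv URel (ι Kv UGen.K')) where
  k_mul_k' := by simpa using mkAlgHom_rel Kv URel.KK'
  k'_mul_k := by simpa using mkAlgHom_rel Kv URel.K'K
  k_mul_e := by simpa using mkAlgHom_rel Kv URel.KE
  k_mul_f := by simpa using mkAlgHom_rel Kv URel.KF
  commutator := by simpa using mkAlgHom_rel Kv URel.EF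

theorem isUqSl2Quadruple_vn (n : ℕ) :
    IsUqSl2Quadruple vv (mkAlgHom Kv (VnRel n) (ι Kv VGen.Ep))
      (mkAlgHom Kv (VnRel n) (ι Kv VGen.Em)) (mkAlgHom Kv (VnRel n) (ι Kv VGen.K))
      (mkAlgHom Kv (VnRel n) (ι Kv VGen.K')) where
  k_mul_k' := by simpa using mkAlgHom_rel Kv (VnRel.KK' (n := n))
  k'_mul_k := by simpa using mkAlgHom_rel Kv (VnRel.K'K (n := n))
  k_mul_e := by simpa using mkAlgHom_rel Kv (VnRel.KE (n := n))
  k_mul_f := by simpa using mkAlgHom_rel Kv (VnRel.KF (n := n))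
  commutator := by simpa using mkAlgHom_rel Kv (VnRel.EF (n := n))

end Presentation

/-- For every positive integer n there is a unique ℚ(v)-algebra
isomorphism φ : U(sl₂) → V_n with φ(E) = E⁺, φ(F) = E⁻, φ(K) = K, φ(K') = K'. -/
theorem stmt13 (n : ℕ) (hn : 0 < n) :
    ∃! φ : RingQuot URel ≃ₐ[Kv] RingQuot (VnRel n),
      φ (RingQuot.mkAlgHom Kv URel (ι Kv UGen.E)) =
          RingQuot.mkAlgHom Kv (VnRel n) (ι Kv VGen.Ep) ∧
      φ (RingQuot.mkAlgHom Kv URel (ι Kv UGen.F)) =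
          RingQuot.mkAlgHom Kv (VnRel n) (ι Kv VGen.Em) ∧
      φ (RingQuot.mkAlgHom Kv URel (ι Kv UGen.K)) =
          RingQuot.mkAlgHom Kv (VnRel n) (ι Kv VGen.K) ∧
      φ (RingQuot.mkAlgHom Kv URel (ι Kv UGen.K')) =
          RingQuot.mkAlgHom Kv (VnRel n) (ι Kv VGen.K') := by
  let φ := uqSl2Lift (isUqSl2Quadruple_vn n)
  let ψ := vnLift hn isUqSl2Quadruple_uqSl2
  have hφψ : φ.comp ψ = AlgHom.id Kv _ := by ext g; cases g <;> simp [φ, ψ]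
  have hψφ : ψ.comp φ = AlgHom.id Kv _ := by ext g; cases g <;> simp [φ, ψ]
  refine ⟨AlgEquiv.ofAlgHom φ ψ hφψ hψφ, by simp [φ], fun χ hχ => ?_⟩
  apply AlgEquiv.coe_toAlgHom_injective
  ext g
  cases g <;> simp [φ, hχ]
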